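/- Fix real constants p > 2, β > 0, Λ > 0, a nonempty compact set W ⊂ ℝ × [0,∞), and η > 0. There exist δ ∈ (0, pη/β) and c > 0, ρ > 0 such that for every T > 0 and every continuously differentiable U : [0,T] → ℝ² satisfying Condition I with U(t) ∈ W for all t ∈ [0,T], U₁(0) ≥ η and 0 ≤ U₂(0) ≤ δ, one has U₁(t) − U₁(0) ≤ −c·t and U₂(t) − U₂(0) ≥ c·t for all t ∈ [0, min(ρ, T)]. -/

import Mathlib

open Set

/-- `F₁(u,v) = -p·u + β·v`. -/
noncomputable def F1 (p β : ℝ) (z : ℝ × ℝ) : ℝ := -p * z.1 + β * z.2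

/-- `F₂ᴸ(u,v) = 2p(p-1) - 2(p-1)v + 2pu(pu - βv) - 2βΛv`. -/
noncomputable def F2L (p β Λ : ℝ) (z : ℝ × ℝ) : ℝ :=
  2 * p * (p - 1) - 2 * (p - 1) * z.2 + 2 * p * z.1 * (p * z.1 - β * z.2) - 2 * β * Λ * z.2

/-- `F₂ᵁ(u,v) = 2p(p-1) - 2(p-1)v + 2pu(pu - βv) + 2βΛv`. -/
noncomputable def F2U (p β Λ : ℝ) (z : ℝ × ℝ) : ℝ :=
  2 * p * (p - 1) - 2 * (p - 1) * z.2 + 2 * p * z.1 * (p * z.1 - β * z.2) + 2 * β * Λ * z.2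

/-- The lower bounding vector field `Φ_L = (F₁, F₂ᴸ)`. -/
noncomputable def PhiL (p β Λ : ℝ) (z : ℝ × ℝ) : ℝ × ℝ := (F1 p β z, F2L p β Λ z)

/-- The upper bounding vector field `Φ_U = (F₁, F₂ᵁ)`. -/
noncomputable def PhiU (p β Λ : ℝ) (z : ℝ × ℝ) : ℝ × ℝ := (F1 p β z, F2U p β Λ z)

/-- **Condition I**: `U : [0,T] → ℝ²` is `C¹` with derivative `U'` satisfying
`U₁' = F₁(U)` and `F₂ᴸ(U) ≤ U₂' ≤ F₂ᵁ(U)` on `[0,T]`. -/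
def CondI (p β Λ T : ℝ) (U U' : ℝ → ℝ × ℝ) : Prop :=
  (∀ t ∈ Icc (0 : ℝ) T, HasDerivWithinAt U (U' t) (Icc (0 : ℝ) T) t) ∧
  ContinuousOn U' (Icc (0 : ℝ) T) ∧
  (∀ t ∈ Icc (0 : ℝ) T, (U' t).1 = F1 p β (U t)) ∧
  (∀ t ∈ Icc (0 : ℝ) T, F2L p β Λ (U t) ≤ (U' t).2 ∧ (U' t).2 ≤ F2U p β Λ (U t))

/-!
On the compact set `W` the bounding fields `Φ_L`, `Φ_U` are bounded, so every trajectory is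
`K`-Lipschitz and stays, for a time `ρ` depending only on the data, in a thin strip
`{u ≥ η/2, |v| ≤ ε}` around the starting point. At `v = 0` one has `F₁ = -p u < 0` and
`F₂ᴸ = 2p(p-1) + 2p²u² > 0`, and both are Lipschitz in `v` with a constant controlled by `W`;
so on the strip `U₁' ≤ -c` and `U₂' ≥ F₂ᴸ(U) ≥ c`, which integrates to the linear bounds.
-/

theorem HasDerivWithinAt.fst {U : ℝ → ℝ × ℝ} {d : ℝ × ℝ} {s : Set ℝ} {t : ℝ}
    (h : HasDerivWithinAt U d s t) : HasDerivWithinAt (fun t => (U t).1) d.1 s t := by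
  simpa using h.hasFDerivWithinAt.fst.hasDerivWithinAt

theorem HasDerivWithinAt.snd {U : ℝ → ℝ × ℝ} {d : ℝ × ℝ} {s : Set ℝ} {t : ℝ}
    (h : HasDerivWithinAt U d s t) : HasDerivWithinAt (fun t => (U t).2) d.2 s t := by
  simpa using h.hasFDerivWithinAt.snd.hasDerivWithinAt

theorem Convex.mul_sub_le_image_sub_of_le_hasDerivWithinAt {D : Set ℝ} (hD : Convex ℝ D)
    {f f' : ℝ → ℝ} {C : ℝ} (hf : ∀ x ∈ D, HasDerivWithinAt f (f' x) D x)
    (hC : ∀ x ∈ D, C ≤ f' x) : ∀ x ∈ D, ∀ y ∈ D, x ≤ y → C * (y - x) ≤ f y - f x := by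
  have hderiv : ∀ x ∈ interior D, HasDerivAt f (f' x) x := fun x hx =>
    (hf x (interior_subset hx)).hasDerivAt (mem_interior_iff_mem_nhds.mp hx)
  refine hD.mul_sub_le_image_sub_of_le_deriv
    (fun x hx => (hf x hx).continuousWithinAt)
    (fun x hx => (hderiv x hx).differentiableAt.differentiableWithinAt) fun x hx => ?_
  rw [(hderiv x hx).deriv]
  exact hC x (interior_subset hx)

theorem Prod.norm_le_max_of_fst_eq_of_snd_mem_Icc {a b c : ℝ × ℝ} (h₁ : a.1 = b.1)
    (hb : b.2 ≤ a.2) (hc : a.2 ≤ c.2) : ‖a‖ ≤ max ‖b‖ ‖c‖ := by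
  have hb_norm : |b.2| ≤ ‖b‖ := norm_snd_le b
  have hc_norm : |c.2| ≤ ‖c‖ := norm_snd_le c
  refine max_le (h₁ ▸ (norm_fst_le b).trans (le_max_left _ _)) (abs_le.mpr ⟨?_, ?_⟩)
  · linarith [neg_abs_le b.2, le_max_left ‖b‖ ‖c‖]
  · linarith [le_abs_self c.2, le_max_right ‖b‖ ‖c‖]

theorem sub_abs_mul_le_F2L (p β Λ : ℝ) (z : ℝ × ℝ) :
    2 * p * (p - 1) - |z.2| * (2 * |p - 1| + 2 * |p * β| * |z.1| + 2 * |β * Λ|) ≤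
      F2L p β Λ z := by
  have hlin : -(|z.2| * (2 * |p - 1| + 2 * |p * β| * |z.1| + 2 * |β * Λ|)) ≤
      -(z.2 * (2 * (p - 1) + 2 * (p * β) * z.1 + 2 * (β * Λ))) := by
    rw [neg_le_neg_iff]
    refine (le_abs_self _).trans ?_
    rw [abs_mul]
    refine mul_le_mul_of_nonneg_left ?_ (abs_nonneg _)
    calc |2 * (p - 1) + 2 * (p * β) * z.1 + 2 * (β * Λ)|
        ≤ |2 * (p - 1)| + |2 * (p * β) * z.1| + |2 * (β * Λ)| := abs_add_three _ _ _
      _ = 2 * |p - 1| + 2 * |p * β| * |z.1| + 2 * |β * Λ| := by simp [abs_mul]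
  have hsq : 0 ≤ 2 * p ^ 2 * z.1 ^ 2 := by positivity
  unfold F2L
  linarith

theorem exists_drift_bounds (p β Λ : ℝ) (hp : 1 < p) (hβ : 0 < β) {η : ℝ} (hη : 0 < η)
    {M : ℝ} (hM : 0 ≤ M) :
    ∃ ε > (0 : ℝ), ∃ c > (0 : ℝ), ∀ z : ℝ × ℝ, η ≤ z.1 → |z.1| ≤ M → |z.2| ≤ ε →
      F1 p β z ≤ -c ∧ c ≤ F2L p β Λ z := by
  set A := 2 * |p - 1| + 2 * |p * β| * M + 2 * |β * Λ| with hA_def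
  have hA : 0 < A := by positivity
  refine ⟨min (p * η / (2 * β)) (p * (p - 1) / A), by positivity,
    min (p * η / 2) (p * (p - 1)), by positivity, fun z hu hzM hv => ⟨?_, ?_⟩⟩
  · have hβv : β * z.2 ≤ p * η / 2 := by
      calc β * z.2 ≤ β * (p * η / (2 * β)) :=
            mul_le_mul_of_nonneg_left ((le_abs_self _).trans (hv.trans (min_le_left _ _))) hβ.le
        _ = p * η / 2 := by field_simp
    have hpu : p * η ≤ p * z.1 := mul_le_mul_of_nonneg_left hu (by linarith)
    unfold F1
    linarith [min_le_left (p * η / 2) (p * (p - 1))]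
  · have hvA : |z.2| * (2 * |p - 1| + 2 * |p * β| * |z.1| + 2 * |β * Λ|) ≤ p * (p - 1) :=
      calc _ ≤ p * (p - 1) / A * A :=
            mul_le_mul (hv.trans (min_le_right _ _)) (by rw [hA_def]; gcongr)
              (by positivity) (by positivity)
        _ = p * (p - 1) := div_mul_cancel₀ _ hA.ne'
    linarith [sub_abs_mul_le_F2L p β Λ z, min_le_right (p * η / 2) (p * (p - 1))]

section CondI

variable {p β Λ T : ℝ} {U U' : ℝ → ℝ × ℝ}

theorem CondI.norm_sub_le (hU : CondI p β Λ T U U') {K : ℝ}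
    (hK : ∀ t ∈ Icc 0 T, max ‖PhiL p β Λ (U t)‖ ‖PhiU p β Λ (U t)‖ ≤ K) :
    ∀ t ∈ Icc 0 T, ‖U t - U 0‖ ≤ K * t := by
  obtain ⟨hderiv, -, hfst, hsnd⟩ := hU
  have hbound : ∀ t ∈ Icc 0 T, ‖U' t‖ ≤ K := fun t ht =>
    (Prod.norm_le_max_of_fst_eq_of_snd_mem_Icc (hfst t ht) (hsnd t ht).1 (hsnd t ht).2).trans
      (hK t ht)
  intro t ht
  have hmvt := (convex_Icc 0 T).norm_image_sub_le_of_norm_hasDerivWithin_le hderiv hbound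
    (left_mem_Icc.mpr (ht.1.trans ht.2)) ht
  rwa [sub_zero, Real.norm_of_nonneg ht.1] at hmvt

theorem CondI.climb (hU : CondI p β Λ T U U') {m c : ℝ} (hmT : m ≤ T)
    (hF : ∀ t ∈ Icc 0 m, F1 p β (U t) ≤ -c ∧ c ≤ F2L p β Λ (U t)) :
    ∀ t ∈ Icc 0 m, (U t).1 - (U 0).1 ≤ -c * t ∧ c * t ≤ (U t).2 - (U 0).2 := by
  obtain ⟨hderiv, -, hfst, hsnd⟩ := hU
  have hsub : Icc 0 m ⊆ Icc 0 T := Icc_subset_Icc_right hmT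
  have hderiv' : ∀ t ∈ Icc 0 m, HasDerivWithinAt U (U' t) (Icc 0 m) t := fun t ht =>
    (hderiv t (hsub ht)).mono hsub
  intro t ht
  have h0 : (0 : ℝ) ∈ Icc 0 m := left_mem_Icc.mpr (ht.1.trans ht.2)
  have hdown := (convex_Icc 0 m).mul_sub_le_image_sub_of_le_hasDerivWithinAt
    (f := fun s => -(U s).1) (C := c) (fun s hs => (hderiv' s hs).fst.neg)
    (fun s hs => by rw [hfst s (hsub hs)]; linarith [(hF s hs).1]) 0 h0 t ht ht.1
  have hup := (convex_Icc 0 m).mul_sub_le_image_sub_of_le_hasDerivWithinAt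
    (fun s hs => (hderiv' s hs).snd)
    (fun s hs => (hF s hs).2.trans (hsnd s (hsub hs)).1) 0 h0 t ht ht.1
  constructor <;> simp only [sub_zero] at hdown hup <;> linarith

end CondI

theorem climb_from_critical_general
    (p β Λ : ℝ) (hp : 2 < p) (hβ : 0 < β)
    (W : Set (ℝ × ℝ)) (hWc : IsCompact W)
    (η : ℝ) (hη : 0 < η) :
    ∃ δ : ℝ, 0 < δ ∧ δ < p * η / β ∧ ∃ c > (0 : ℝ), ∃ ρ > (0 : ℝ),
      ∀ T > (0 : ℝ), ∀ U U' : ℝ → ℝ × ℝ,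
        CondI p β Λ T U U' → (∀ t ∈ Icc (0 : ℝ) T, U t ∈ W) →
        η ≤ (U 0).1 → 0 ≤ (U 0).2 → (U 0).2 ≤ δ →
        ∀ t ∈ Icc (0 : ℝ) (min ρ T),
          (U t).1 - (U 0).1 ≤ -c * t ∧ c * t ≤ (U t).2 - (U 0).2 := by
  obtain ⟨M, hM0, hM⟩ := hWc.isBounded.exists_pos_norm_le
  obtain ⟨ε, hε, c, hc, hdrift⟩ :=
    exists_drift_bounds p β Λ (by linarith) hβ (half_pos hη) hM0.le
  have hPhi : Continuous fun z => (PhiL p β Λ z, PhiU p β Λ z) := by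
    unfold PhiL PhiU F1 F2L F2U
    fun_prop
  obtain ⟨K, hK0, hK⟩ := (hWc.image hPhi).isBounded.exists_pos_norm_le
  set δ := min (ε / 2) (p * η / (2 * β))
  have hδ : 0 < δ := by positivity
  have hδη : p * η / (2 * β) < p * η / β := by gcongr; linarith
  refine ⟨δ, hδ, (min_le_right _ _).trans_lt hδη, c, hc, min (η / 2) δ / K, by positivity,
    ?_⟩
  intro T _ U U' hU hUW hU1 _ hU2 t ht
  refine hU.climb (min_le_right _ _) (fun s hs => ?_) t ht
  have hsT : s ∈ Icc 0 T := ⟨hs.1, hs.2.trans (min_le_right _ _)⟩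
  have hclose : ‖U s - U 0‖ ≤ min (η / 2) δ :=
    calc ‖U s - U 0‖ ≤ K * s := hU.norm_sub_le (fun r hr =>
          (Prod.norm_def _).symm.le.trans (hK _ (mem_image_of_mem _ (hUW r hr)))) s hsT
      _ ≤ K * (min (η / 2) δ / K) := by gcongr; exact hs.2.trans (min_le_left _ _)
      _ = min (η / 2) δ := mul_div_cancel₀ _ hK0.ne'
  have h₁ := abs_le.mp ((norm_fst_le (U s - U 0)).trans hclose)
  have h₂ := abs_le.mp ((norm_snd_le (U s - U 0)).trans hclose)
  have hδε : δ ≤ ε / 2 := min_le_left _ _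
  simp only [Prod.fst_sub, Prod.snd_sub] at h₁ h₂
  refine hdrift (U s) ?_ ((norm_fst_le (U s)).trans (hM _ (hUW s hsT))) (abs_le.mpr ⟨?_, ?_⟩) <;>
    linarith [min_le_left (η / 2) δ, min_le_right (η / 2) δ]

/-- **Climbing away from near-critical points.** For every nonempty compact
`W ⊂ ℝ × [0,∞)` and every `η > 0` there are `δ ∈ (0, pη/β)`, `c > 0` and `ρ > 0` such
that every trajectory satisfying Condition I that stays in `W` and starts with
`U₁(0) ≥ η` and `0 ≤ U₂(0) ≤ δ` satisfies `U₁(t) − U₁(0) ≤ −c t` and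
`U₂(t) − U₂(0) ≥ c t` for all `t ∈ [0, min(ρ, T)]`. -/
theorem climb_from_critical
    (p β Λ : ℝ) (hp : 2 < p) (hβ : 0 < β) (hΛ : 0 < Λ)
    (W : Set (ℝ × ℝ)) (hWc : IsCompact W) (hWne : W.Nonempty)
    (hWpos : ∀ z ∈ W, 0 ≤ z.2)
    (η : ℝ) (hη : 0 < η) :
    ∃ δ : ℝ, 0 < δ ∧ δ < p * η / β ∧ ∃ c > (0 : ℝ), ∃ ρ > (0 : ℝ),
      ∀ T > (0 : ℝ), ∀ U U' : ℝ → ℝ × ℝ,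
        CondI p β Λ T U U' → (∀ t ∈ Icc (0 : ℝ) T, U t ∈ W) →
        η ≤ (U 0).1 → 0 ≤ (U 0).2 → (U 0).2 ≤ δ →
        ∀ t ∈ Icc (0 : ℝ) (min ρ T),
          (U t).1 - (U 0).1 ≤ -c * t ∧ c * t ≤ (U t).2 - (U 0).2 :=
  climb_from_critical_general p β Λ hp hβ W hWc η hη
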